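/- Let E be a row-finite directed graph with no sinks and let F be an in-split of E, formed from partitions {𝓔ᵛ₁,…,𝓔ᵛ_{m(v)}} of r⁻¹(v) for each v with r⁻¹(v) ≠ ∅. Then the assignment v(k) ↦ vᵢ(k), where 1 ≤ i ≤ m(v) is chosen arbitrarily (and v(k) ↦ v(k) when r⁻¹(v) = ∅), is independent of the choice of i (all vᵢ(k) coincide in T_F) and extends to a ℤ-monoid isomorphism T_E ≅ T_F. -/

import Mathlib

/-- A directed graph: a set of vertices `V`, a set of edges `Ed`,
and source and range maps. -/
structure DGraph (V : Type) (Ed : Type) where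
  s : Ed → V
  r : Ed → V

namespace DGraph

variable {V Ed : Type} (G : DGraph V Ed)

/-- A sink is a vertex emitting no edges. -/
def IsSink (v : V) : Prop := ∀ e : Ed, G.s e ≠ v

/-- A source is a vertex receiving no edges. -/
def IsSource (v : V) : Prop := ∀ e : Ed, G.r e ≠ v

/-- A graph is row-finite if every vertex emits finitely many edges. -/
def RowFinite : Prop := ∀ v : V, {e : Ed | G.s e = v}.Finite

theorem rowFinite_of_finite [Finite Ed] : G.RowFinite := fun _ => Set.toFinite _

/-- There is an edge from `u` to `w`. -/
def Step (u w : V) : Prop := ∃ e : Ed, G.s e = u ∧ G.r e = w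

/-- `u` flows to `w`: `u = w` or there is a path from `u` to `w`. -/
def FlowsTo (u w : V) : Prop := Relation.ReflTransGen G.Step u w

/-- Strongly connected graph. -/
def StronglyConnected : Prop := ∀ u w : V, G.FlowsTo u w

/-- A (finite) path of length `≥ 1`: a nonempty list of consecutive edges. -/
structure GPath (G : DGraph V Ed) where
  edges : List Ed
  ne : edges ≠ []
  chain : edges.Chain' (fun e f => G.r e = G.s f)

namespace GPath

variable {G}

/-- The source of a path. -/
def src (p : G.GPath) : V := G.s (p.edges.head p.ne)

/-- The range of a path. -/
def tgt (p : G.GPath) : V := G.r (p.edges.getLast p.ne)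

/-- The length of a path. -/
def length (p : G.GPath) : ℕ := p.edges.length

/-- The set of vertices of a path (the sources of its edges). -/
def vset (p : G.GPath) : Set V := {v | ∃ e ∈ p.edges, G.s e = v}

/-- A cycle: a closed path with pairwise distinct edges. -/
def IsCycle (p : G.GPath) : Prop := p.src = p.tgt ∧ p.edges.Nodup

/-- The path (cycle) has an exit: an edge `f` with `s f = s eᵢ` but `f ≠ eᵢ`. -/
def HasExit (p : G.GPath) : Prop := ∃ (f e : Ed), e ∈ p.edges ∧ G.s f = G.s e ∧ f ≠ e

/-- An extreme cycle: a cycle with an exit such that every path leaving it returns to it. -/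
def IsExtremeCycle (p : G.GPath) : Prop :=
  p.IsCycle ∧ p.HasExit ∧
    ∀ lam : G.GPath, lam.src ∈ p.vset → ∃ w ∈ p.vset, G.FlowsTo lam.tgt w

end GPath

/-- Lengths of closed paths based at `v`. -/
def closedLens (v : V) : Set ℕ :=
  {n | ∃ p : G.GPath, p.src = v ∧ p.tgt = v ∧ p.length = n}

/-- `d` is the period of `v`: the greatest common divisor of the lengths of closed
paths based at `v`. -/
def IsPeriodOf (d : ℕ) (v : V) : Prop :=
  (∀ n ∈ G.closedLens v, d ∣ n) ∧ ∀ k : ℕ, (∀ n ∈ G.closedLens v, k ∣ n) → k ∣ d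

/-- A line point: no vertex that `v` flows to has a bifurcation or lies on a closed path. -/
def LinePoint (v : V) : Prop :=
  ∀ w : V, G.FlowsTo v w →
    (∀ e f : Ed, G.s e = w → G.s f = w → e = f) ∧
      ¬ ∃ p : G.GPath, p.src = w ∧ p.tgt = w

end DGraph

section MonoidOrder

variable {M : Type} [AddCommMonoid M]

/-- The algebraic preorder on a commutative monoid: `a ≤ b` iff `a + c = b` for some `c`. -/
def MLe (a b : M) : Prop := ∃ c : M, a + c = b

/-- An order ideal of a commutative monoid. -/
structure IsOrderIdeal (I : Set M) : Prop where
  zero_mem : (0 : M) ∈ I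
  add_mem : ∀ {a b : M}, a ∈ I → b ∈ I → a + b ∈ I
  mem_of_le : ∀ {a b : M}, b ∈ I → MLe a b → a ∈ I

/-- The order ideal generated by an element `x`: all `y` with `y ≤ n • x` for some `n`. -/
def orderIdealGen (x : M) : Set M := {y | ∃ n : ℕ, MLe y (n • x)}

/-- A simple order ideal: a nonzero order ideal whose only order sub-ideals are `0` and itself. -/
def IsSimpleOrderIdeal (I : Set M) : Prop :=
  IsOrderIdeal I ∧ I ≠ {0} ∧ ∀ J : Set M, IsOrderIdeal J → J ⊆ I → J = {0} ∨ J = I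

/-- The nonzero elements of `I` form a group under addition. -/
def NonzeroGroup (I : Set M) : Prop :=
  (∀ x ∈ I, ∀ y ∈ I, x ≠ 0 → y ≠ 0 → x + y ≠ 0) ∧
    ∃ e ∈ I, e ≠ (0 : M) ∧ (∀ x ∈ I, x ≠ 0 → e + x = x) ∧
      ∀ x ∈ I, x ≠ 0 → ∃ y ∈ I, y ≠ 0 ∧ x + y = e

/-- The congruence on a commutative monoid associated to an ideal `I`:
`a ≈ b` iff `a + c = b + d` for some `c, d ∈ I`. -/
def idealCon (I : Set M) (h0 : (0 : M) ∈ I)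
    (hadd : ∀ {a b : M}, a ∈ I → b ∈ I → a + b ∈ I) : AddCon M where
  r a b := ∃ c ∈ I, ∃ d ∈ I, a + c = b + d
  iseqv := by
    refine ⟨fun a => ⟨0, h0, 0, h0, rfl⟩, ?_, ?_⟩
    · rintro a b ⟨c, hc, d, hd, h⟩
      exact ⟨d, hd, c, hc, h.symm⟩
    · rintro a b c ⟨x, hx, y, hy, h1⟩ ⟨x', hx', y', hy', h2⟩
      refine ⟨x + x', hadd hx hx', y' + y, hadd hy' hy, ?_⟩
      calc a + (x + x') = (a + x) + x' := (add_assoc _ _ _).symm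
        _ = (b + y) + x' := by rw [h1]
        _ = (b + x') + y := by rw [add_right_comm]
        _ = (c + y') + y := by rw [h2]
        _ = c + (y' + y) := add_assoc _ _ _
  add' := by
    rintro a b a' b' ⟨c, hc, d, hd, h1⟩ ⟨c', hc', d', hd', h2⟩
    refine ⟨c + c', hadd hc hc', d + d', hadd hd hd', ?_⟩
    rw [add_add_add_comm, h1, h2, add_add_add_comm]

end MonoidOrder

namespace DGraph

variable {V Ed : Type} (G : DGraph V Ed)

/-- The defining relations of the talented monoid, as a relation on the free
commutative monoid on `E⁰ × ℤ`. -/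
def talRel (hrf : G.RowFinite) (a b : (V × ℤ) →₀ ℕ) : Prop :=
  ∃ (v : V) (i : ℤ), ¬ G.IsSink v ∧ a = Finsupp.single (v, i) 1 ∧
    b = ∑ e ∈ (hrf v).toFinset, Finsupp.single (G.r e, i + 1) 1

/-- The congruence generated by the defining relations of the talented monoid. -/
noncomputable def talCon (hrf : G.RowFinite) : AddCon ((V × ℤ) →₀ ℕ) := addConGen (G.talRel hrf)

/-- The talented monoid `T_E` of a row-finite graph. -/
noncomputable def Tal (hrf : G.RowFinite) : Type := (G.talCon hrf).Quotient

noncomputable instance (hrf : G.RowFinite) : AddCommMonoid (G.Tal hrf) :=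
  inferInstanceAs (AddCommMonoid (G.talCon hrf).Quotient)

/-- The generator `v(i)` of the talented monoid. -/
noncomputable def gen (hrf : G.RowFinite) (v : V) (i : ℤ) : G.Tal hrf :=
  (G.talCon hrf).mk' (Finsupp.single (v, i) 1)

/-- The action of `n : ℤ` on the talented monoid, determined by `ⁿv(i) = v(i+n)`. -/
noncomputable def shift (hrf : G.RowFinite) (n : ℤ) : G.Tal hrf →+ G.Tal hrf :=
  AddCon.lift _
    ((AddCon.mk' _).comp
      (Finsupp.mapDomain.addMonoidHom (fun p : V × ℤ => (p.1, p.2 + n))))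
    (by
      apply AddCon.addConGen_le.mpr
      rintro a b ⟨v, i, hv, rfl, rfl⟩
      refine (AddCon.ker_rel _).mpr ?_
      show (G.talCon hrf).mk'
            (Finsupp.mapDomain (fun p : V × ℤ => (p.1, p.2 + n)) (Finsupp.single (v, i) 1)) =
          (G.talCon hrf).mk'
            (Finsupp.mapDomain (fun p : V × ℤ => (p.1, p.2 + n))
              (∑ e ∈ (hrf v).toFinset, Finsupp.single (G.r e, i + 1) 1))
      rw [Finsupp.mapDomain_single, Finsupp.mapDomain_finset_sum]
      simp only [Finsupp.mapDomain_single]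
      refine (AddCon.eq (G.talCon hrf)).mpr ?_
      refine AddConGen.Rel.of _ _ ⟨v, i + n, hv, rfl, ?_⟩
      exact Finset.sum_congr rfl fun e _ => by rw [add_right_comm])

end DGraph


namespace DGraph

variable {V Ed : Type} (G : DGraph V Ed)

/-- A ℤ-order ideal of the talented monoid: an order ideal closed under the ℤ-action. -/
def IsZOrderIdeal (hrf : G.RowFinite) (I : Set (G.Tal hrf)) : Prop :=
  IsOrderIdeal I ∧ ∀ (n : ℤ) (x : G.Tal hrf), x ∈ I → G.shift hrf n x ∈ I

/-- The ℤ-order ideal generated by a set `S`. -/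
def zIdealGen (hrf : G.RowFinite) (S : Set (G.Tal hrf)) : Set (G.Tal hrf) :=
  ⋂₀ {I : Set (G.Tal hrf) | G.IsZOrderIdeal hrf I ∧ S ⊆ I}

/-- A simple ℤ-order ideal: a nonzero ℤ-order ideal whose only ℤ-order sub-ideals
are `0` and itself. -/
def IsSimpleZIdeal (hrf : G.RowFinite) (I : Set (G.Tal hrf)) : Prop :=
  G.IsZOrderIdeal hrf I ∧ I ≠ {0} ∧
    ∀ J : Set (G.Tal hrf), G.IsZOrderIdeal hrf J → J ⊆ I → J = {0} ∨ J = I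

/-- The adjacency matrix of a graph: the `(u, w)` entry is the number of edges
from `u` to `w`. -/
noncomputable def adj : Matrix V V ℕ := Matrix.of fun u w => Nat.card {e : Ed // G.s e = u ∧ G.r e = w}

/-- The defining relations of the graph monoid `M_E`, as a relation on the free
commutative monoid on `E⁰`. -/
def gmRel (hrf : G.RowFinite) (a b : V →₀ ℕ) : Prop :=
  ∃ v : V, ¬ G.IsSink v ∧ a = Finsupp.single v 1 ∧
    b = ∑ e ∈ (hrf v).toFinset, Finsupp.single (G.r e) 1

/-- The graph monoid `M_E` of a row-finite graph. -/
noncomputable def GM (hrf : G.RowFinite) : Type := (addConGen (G.gmRel hrf)).Quotient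

noncomputable instance (hrf : G.RowFinite) : AddCommMonoid (G.GM hrf) :=
  inferInstanceAs (AddCommMonoid (addConGen (G.gmRel hrf)).Quotient)

/-- The smallest reflexive, transitive and additive relation on the free commutative
monoid on `E⁰` containing the defining relations of the graph monoid. -/
inductive FlowRel (hrf : G.RowFinite) : (V →₀ ℕ) → (V →₀ ℕ) → Prop
  | of {a b : V →₀ ℕ} : G.gmRel hrf a b → FlowRel hrf a b
  | refl (a : V →₀ ℕ) : FlowRel hrf a a
  | trans {a b c : V →₀ ℕ} : FlowRel hrf a b → FlowRel hrf b c → FlowRel hrf a c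
  | add_right {a b : V →₀ ℕ} (c : V →₀ ℕ) : FlowRel hrf a b → FlowRel hrf (a + c) (b + c)

/-- The quotient of the talented monoid by a ℤ-order ideal. -/
noncomputable def TalQuot (hrf : G.RowFinite) (I : Set (G.Tal hrf))
    (hI : G.IsZOrderIdeal hrf I) : Type :=
  (idealCon I hI.1.zero_mem (fun ha hb => hI.1.add_mem ha hb)).Quotient

noncomputable instance (hrf : G.RowFinite) (I : Set (G.Tal hrf))
    (hI : G.IsZOrderIdeal hrf I) : AddCommMonoid (G.TalQuot hrf I hI) :=
  inferInstanceAs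
    (AddCommMonoid (idealCon I hI.1.zero_mem (fun ha hb => hI.1.add_mem ha hb)).Quotient)

/-- The ℤ-action descends to the quotient of the talented monoid by a ℤ-order ideal. -/
noncomputable def qshift (hrf : G.RowFinite) (I : Set (G.Tal hrf))
    (hI : G.IsZOrderIdeal hrf I) (n : ℤ) : G.TalQuot hrf I hI →+ G.TalQuot hrf I hI :=
  AddCon.lift _
    ((AddCon.mk' (idealCon I hI.1.zero_mem (fun ha hb => hI.1.add_mem ha hb))).comp
      (G.shift hrf n))
    (by
      rintro a b ⟨c, hc, d, hd, h⟩
      show AddCon.ker _ _ _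
      refine (AddCon.ker_rel _).mpr ?_
      show (AddCon.mk' _) (G.shift hrf n a) = (AddCon.mk' _) (G.shift hrf n b)
      refine (AddCon.eq _).mpr ?_
      exact ⟨G.shift hrf n c, hI.2 n c hc, G.shift hrf n d, hI.2 n d hd, by
        rw [← map_add, ← map_add, h]⟩)

end DGraph


namespace DGraph

variable {V Ed : Type} {H : DGraph V Ed}

lemma gen_rel (hrf : H.RowFinite) {v : V} (hv : ¬ H.IsSink v) (k : ℤ) :
    H.gen hrf v k = ∑ e ∈ (hrf v).toFinset, H.gen hrf (H.r e) (k + 1) := by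
  show (H.talCon hrf).mk' _ = _
  rw [show (∑ e ∈ (hrf v).toFinset, H.gen hrf (H.r e) (k + 1)) =
      (H.talCon hrf).mk' (∑ e ∈ (hrf v).toFinset, Finsupp.single (H.r e, k + 1) 1) from
    (map_sum _ _ _).symm]
  exact (AddCon.eq _).mpr (AddConGen.Rel.of _ _ ⟨v, k, hv, rfl, rfl⟩)

lemma shift_gen (hrf : H.RowFinite) (n : ℤ) (v : V) (k : ℤ) :
    H.shift hrf n (H.gen hrf v k) = H.gen hrf v (k + n) := by
  show (H.talCon hrf).lift _ _ ((H.talCon hrf).mk' _) = _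
  erw [AddCon.lift_mk']
  show (H.talCon hrf).mk' (Finsupp.mapDomain _ (Finsupp.single (v, k) 1)) = _
  rw [Finsupp.mapDomain_single]
  rfl

lemma tal_hom_ext (hrf : H.RowFinite) {M : Type} [AddCommMonoid M]
    (f g : H.Tal hrf →+ M) (h : ∀ v k, f (H.gen hrf v k) = g (H.gen hrf v k)) : f = g := by
  apply AddMonoidHom.ext
  intro x
  obtain ⟨a, rfl⟩ := AddCon.mk'_surjective x
  have hfg : f.comp (AddCon.mk' _) = g.comp (AddCon.mk' _) := by
    apply Finsupp.addHom_ext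
    rintro ⟨v, k⟩ n
    have hs : Finsupp.single ((v, k) : V × ℤ) n = n • Finsupp.single (v, k) 1 := by
      simp [Finsupp.smul_single]
    simp only [AddMonoidHom.comp_apply, hs, map_nsmul]
    exact congrArg (n • ·) (h v k)
  exact DFunLike.congr_fun hfg a

end DGraph

/-- If `E` has no sinks and `F` is an in-split of `E`, then `v(k) ↦ vᵢ(k)`
(for any admissible `i`, all choices agreeing) is a ℤ-monoid isomorphism `T_E ≅ T_F`.
Here the in-split data is a partition of each `r⁻¹(v)` into parts `1, …, m(v)`, recorded by
the part-index function `P` (with nonempty parts); the vertices of `F` are pairs `(v, i)`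
with `1 ≤ i ≤ m(v)` (or `(v, 0)` when `v` is a source), the edges of `F` are pairs `(e, j)`
with `1 ≤ j ≤ m(s(e))` (or `(e, 0)` when `s(e)` is a source), and
`s(e, j) = (s(e), j)`, `r(e, j) = (r(e), P(e))`. -/
theorem statement2 {V Ed : Type} (G : DGraph V Ed) (hrf : G.RowFinite)
    (hnosink : ∀ u : V, ¬ G.IsSink u)
    (m : V → ℕ) (P : Ed → ℕ)
    (hP : ∀ e : Ed, 1 ≤ P e ∧ P e ≤ m (G.r e))
    (hpart : ∀ (u : V) (i : ℕ), ¬ G.IsSource u → 1 ≤ i → i ≤ m u →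
      ∃ e : Ed, G.r e = u ∧ P e = i)
    (F : DGraph {p : V × ℕ // (1 ≤ p.2 ∧ p.2 ≤ m p.1) ∨ (p.2 = 0 ∧ G.IsSource p.1)}
      {q : Ed × ℕ // (1 ≤ q.2 ∧ q.2 ≤ m (G.s q.1)) ∨ (q.2 = 0 ∧ G.IsSource (G.s q.1))})
    (hFs : ∀ q, (F.s q).1 = (G.s q.1.1, q.1.2))
    (hFr : ∀ q, (F.r q).1 = (G.r q.1.1, P q.1.1))
    (hrfF : F.RowFinite) :
    ∃ φ : G.Tal hrf ≃+ F.Tal hrfF,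
      (∀ (n : ℤ) (x : G.Tal hrf), φ (G.shift hrf n x) = F.shift hrfF n (φ x)) ∧
        ∀ (w : {p : V × ℕ // (1 ≤ p.2 ∧ p.2 ≤ m p.1) ∨ (p.2 = 0 ∧ G.IsSource p.1)})
          (k : ℤ), φ (G.gen hrf w.1.1 k) = F.gen hrfF w k := by
  classical
  -- `m v = 0` forces `v` to be a source
  have hms : ∀ v : V, m v = 0 → G.IsSource v := by
    intro v hv e hre
    have h := hP e
    rw [hre] at h
    omega
  -- a choice of vertex of `F` over each vertex of `E`
  let cvert : V → {p : V × ℕ // (1 ≤ p.2 ∧ p.2 ≤ m p.1) ∨ (p.2 = 0 ∧ G.IsSource p.1)} :=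
    fun v => if h : 1 ≤ m v then ⟨(v, 1), Or.inl ⟨le_refl 1, h⟩⟩
      else ⟨(v, 0), Or.inr ⟨rfl, hms v (by omega)⟩⟩
  have hcv : ∀ v, (cvert v).1.1 = v := by
    intro v
    by_cases h : 1 ≤ m v <;> simp [cvert, h]
  -- lifting edges
  have hedge : ∀ (w : {p : V × ℕ // (1 ≤ p.2 ∧ p.2 ≤ m p.1) ∨ (p.2 = 0 ∧ G.IsSource p.1)})
      (e : Ed), G.s e = w.1.1 →
      ((1 ≤ w.1.2 ∧ w.1.2 ≤ m (G.s e)) ∨ (w.1.2 = 0 ∧ G.IsSource (G.s e))) := by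
    intro w e he
    rw [he]
    exact w.2
  have hmem : ∀ (w : {p : V × ℕ // (1 ≤ p.2 ∧ p.2 ≤ m p.1) ∨ (p.2 = 0 ∧ G.IsSource p.1)})
      (q : {q : Ed × ℕ // (1 ≤ q.2 ∧ q.2 ≤ m (G.s q.1)) ∨ (q.2 = 0 ∧ G.IsSource (G.s q.1))}),
      q ∈ (hrfF w).toFinset → (G.s q.1.1, q.1.2) = w.1 := by
    intro w q hq
    rw [Set.Finite.mem_toFinset] at hq
    rw [← hFs q, hq]
  -- the reindexing of sums over edges of `F` out of `w` by edges of `E` out of `w.1.1`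
  have hbij : ∀ (w : {p : V × ℕ // (1 ≤ p.2 ∧ p.2 ≤ m p.1) ∨ (p.2 = 0 ∧ G.IsSource p.1)})
      (N : Type) (_ : AddCommMonoid N)
      (f : {q : Ed × ℕ // (1 ≤ q.2 ∧ q.2 ≤ m (G.s q.1)) ∨ (q.2 = 0 ∧ G.IsSource (G.s q.1))} → N)
      (g : Ed → N), (∀ q ∈ (hrfF w).toFinset, f q = g q.1.1) →
      ∑ q ∈ (hrfF w).toFinset, f q = ∑ e ∈ (hrf w.1.1).toFinset, g e := by
    intro w N _ f g hfg
    refine Finset.sum_bij' (fun q _ => q.1.1)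
      (fun e he => ⟨(e, w.1.2), hedge w e (by simpa using he)⟩) ?_ ?_ ?_ ?_ ?_
    · intro q hq
      simpa using congrArg Prod.fst (hmem w q hq)
    · intro e he
      rw [Set.Finite.mem_toFinset]
      apply Subtype.ext
      rw [hFs]
      have hse : G.s e = w.1.1 := by simpa using he
      show (G.s e, w.1.2) = w.1
      rw [hse]
    · intro q hq
      apply Subtype.ext
      have h2 := congrArg Prod.snd (hmem w q hq)
      exact Prod.ext rfl (by simpa using h2.symm)
    · intro e he
      rfl
    · intro q hq
      exact hfg q hq
  -- `F` has no sinks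
  have hnosinkF : ∀ (w : {p : V × ℕ // (1 ≤ p.2 ∧ p.2 ≤ m p.1) ∨ (p.2 = 0 ∧ G.IsSource p.1)}),
      ¬ F.IsSink w := by
    intro w hsink
    obtain ⟨e, he⟩ : ∃ e, G.s e = w.1.1 := by
      have h := hnosink w.1.1
      unfold DGraph.IsSink at h
      push_neg at h
      exact h
    refine hsink ⟨(e, w.1.2), hedge w e he⟩ ?_
    apply Subtype.ext
    rw [hFs, he]
  -- the expansion of a generator of `T_F` independent of the index
  have hsumF : ∀ (w : {p : V × ℕ // (1 ≤ p.2 ∧ p.2 ≤ m p.1) ∨ (p.2 = 0 ∧ G.IsSource p.1)})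
      (k : ℤ), F.gen hrfF w k =
      ∑ e ∈ (hrf w.1.1).toFinset, F.gen hrfF ⟨(G.r e, P e), Or.inl (hP e)⟩ (k + 1) := by
    intro w k
    rw [DGraph.gen_rel hrfF (hnosinkF w) k]
    refine hbij w _ _ _ _ ?_
    intro q hq
    congr 1
    apply Subtype.ext
    rw [hFr]
  have hsame : ∀ (w w' : {p : V × ℕ // (1 ≤ p.2 ∧ p.2 ≤ m p.1) ∨ (p.2 = 0 ∧ G.IsSource p.1)}),
      w.1.1 = w'.1.1 → ∀ k, F.gen hrfF w k = F.gen hrfF w' k := by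
    intro w w' h k
    rw [hsumF w k, hsumF w' k, h]
  -- the forward homomorphism
  let φ0 : ((V × ℤ) →₀ ℕ) →+ F.Tal hrfF :=
    Finsupp.liftAddHom fun p => multiplesHom _ (F.gen hrfF (cvert p.1) p.2)
  have hφ0 : ∀ v k, φ0 (Finsupp.single (v, k) 1) = F.gen hrfF (cvert v) k := by
    intro v k
    simp [φ0]
  have hcond : G.talCon hrf ≤ AddCon.ker φ0 := by
    apply AddCon.addConGen_le.mpr
    rintro a b ⟨v, k, hv, rfl, rfl⟩
    rw [AddCon.ker_rel, hφ0, map_sum]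
    have h1 : ∀ e ∈ (hrf v).toFinset, φ0 (Finsupp.single (G.r e, k + 1) 1) =
        F.gen hrfF ⟨(G.r e, P e), Or.inl (hP e)⟩ (k + 1) := by
      intro e _
      rw [hφ0]
      exact hsame (cvert (G.r e)) ⟨(G.r e, P e), Or.inl (hP e)⟩ (hcv (G.r e)) (k + 1)
    rw [Finset.sum_congr rfl h1]
    have h2 := hsumF (cvert v) k
    rw [hcv v] at h2
    exact h2
  let φ : G.Tal hrf →+ F.Tal hrfF := AddCon.lift _ φ0 hcond
  have hφgen : ∀ v k, φ (G.gen hrf v k) = F.gen hrfF (cvert v) k := by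
    intro v k
    exact (AddCon.lift_mk' hcond _).trans (hφ0 v k)
  -- the inverse homomorphism
  let ψ0 : (({p : V × ℕ // (1 ≤ p.2 ∧ p.2 ≤ m p.1) ∨ (p.2 = 0 ∧ G.IsSource p.1)} × ℤ) →₀ ℕ)
      →+ G.Tal hrf :=
    Finsupp.liftAddHom fun p => multiplesHom _ (G.gen hrf p.1.1.1 p.2)
  have hψ0 : ∀ w k, ψ0 (Finsupp.single (w, k) 1) = G.gen hrf w.1.1 k := by
    intro w k
    simp [ψ0]
  have hcond' : F.talCon hrfF ≤ AddCon.ker ψ0 := by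
    apply AddCon.addConGen_le.mpr
    rintro a b ⟨w, k, hw, rfl, rfl⟩
    rw [AddCon.ker_rel, hψ0, map_sum]
    have h1 : ∀ q ∈ (hrfF w).toFinset, ψ0 (Finsupp.single (F.r q, k + 1) 1) =
        G.gen hrf (G.r q.1.1) (k + 1) := by
      intro q _
      rw [hψ0]
      congr 1
      rw [hFr]
    rw [Finset.sum_congr rfl h1, DGraph.gen_rel hrf (hnosink w.1.1) k]
    exact (hbij w _ _ (fun q => G.gen hrf (G.r q.1.1) (k + 1))
      (fun e => G.gen hrf (G.r e) (k + 1)) (fun q _ => rfl)).symm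
  let ψ : F.Tal hrfF →+ G.Tal hrf := AddCon.lift _ ψ0 hcond'
  have hψgen : ∀ w k, ψ (F.gen hrfF w k) = G.gen hrf w.1.1 k := by
    intro w k
    exact (AddCon.lift_mk' hcond' _).trans (hψ0 w k)
  -- the two compositions are the identity
  have hψφ : ∀ x, ψ (φ x) = x := by
    have h : ψ.comp φ = AddMonoidHom.id _ := by
      apply DGraph.tal_hom_ext hrf
      intro v k
      simp only [AddMonoidHom.comp_apply, AddMonoidHom.id_apply]
      rw [hφgen, hψgen, hcv]
    exact fun x => DFunLike.congr_fun h x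
  have hφψ : ∀ x, φ (ψ x) = x := by
    have h : φ.comp ψ = AddMonoidHom.id _ := by
      apply DGraph.tal_hom_ext hrfF
      intro w k
      simp only [AddMonoidHom.comp_apply, AddMonoidHom.id_apply]
      rw [hψgen, hφgen]
      exact hsame (cvert w.1.1) w (hcv w.1.1) k
    exact fun x => DFunLike.congr_fun h x
  refine ⟨AddEquiv.mk' ⟨(φ : G.Tal hrf → F.Tal hrfF), (ψ : F.Tal hrfF → G.Tal hrf),
    hψφ, hφψ⟩ φ.map_add, ?_, ?_⟩
  · intro n
    have h : φ.comp (G.shift hrf n) = (F.shift hrfF n).comp φ := by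
      apply DGraph.tal_hom_ext hrf
      intro v k
      simp only [AddMonoidHom.comp_apply]
      rw [DGraph.shift_gen, hφgen, hφgen, DGraph.shift_gen]
    exact fun x => DFunLike.congr_fun h x
  · intro w k
    exact (hφgen w.1.1 k).trans (hsame (cvert w.1.1) w (hcv w.1.1) k)
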